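/- arXiv:2304.06791 — 8 statements merged into one kernel-verified Lean document; each statement's English description precedes it below -/
import Mathlib

section
/- Let H ∈ k⟦X⟧ be nonzero. (a) If Φ₁ and Φ₂ both have order 1 and satisfy H∘Φ₁ = Φ₁′·H and H∘Φ₂ = Φ₂′·H, then the composition Φ₁∘Φ₂ has order 1 and satisfies H∘(Φ₁∘Φ₂) = (Φ₁∘Φ₂)′·H. (b) If Φ has order 1, satisfies H∘Φ = Φ′·H, and Ψ ∈ k⟦X⟧ satisfies Φ∘Ψ = X and Ψ∘Φ = X (Ψ is the compositional inverse of Φ), then H∘Ψ = Ψ′·H. Hence the set of order-1 solutions of the Aczél–Jabotinsky equation with generator H is a group under substitution. -/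
/-!
Substitution of series with zero constant coefficient is associative and multiplicative and obeys
the chain rule `(Φ₁ ∘ Φ₂)′ = (Φ₁′ ∘ Φ₂) · Φ₂′`. Substituting `Φ₂` into `H ∘ Φ₁ = Φ₁′ · H` therefore
gives `H ∘ (Φ₁ ∘ Φ₂) = (Φ₁′ ∘ Φ₂) · Φ₂′ · H = (Φ₁ ∘ Φ₂)′ · H`. For the inverse `Ψ`, substituting `Ψ`
into `H ∘ Φ = Φ′ · H` gives `H = (Φ′ ∘ Ψ) · (H ∘ Ψ)`, while the chain rule applied to `Φ ∘ Ψ = X`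
gives `(Φ′ ∘ Ψ) · Ψ′ = 1`; multiplying the first identity by `Ψ′` yields `H ∘ Ψ = Ψ′ · H`.
-/

open PowerSeries

variable {k : Type*} [Field k] [CharZero k]

/-- Substitution of `g` (with zero constant coefficient) into `f`. -/
noncomputable def comp (f g : PowerSeries k) : PowerSeries k :=
  PowerSeries.mk fun m => ∑ n ∈ Finset.range (m + 1),
    PowerSeries.coeff n f * PowerSeries.coeff m (g ^ n)

section SolvesAczelJabotinsky

variable {R : Type*} [CommRing R]

def SolvesAczelJabotinsky (H Φ : R⟦X⟧) : Prop :=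
  subst Φ H = d⁄dX R Φ * H

variable {H Φ Ψ Φ₁ Φ₂ : R⟦X⟧}

theorem SolvesAczelJabotinsky.comp (hΦ₁ : HasSubst Φ₁) (hΦ₂ : HasSubst Φ₂)
    (h₁ : SolvesAczelJabotinsky H Φ₁) (h₂ : SolvesAczelJabotinsky H Φ₂) :
    SolvesAczelJabotinsky H (subst Φ₂ Φ₁) := calc
  subst (subst Φ₂ Φ₁) H = subst Φ₂ (subst Φ₁ H) := (subst_comp_subst_apply hΦ₁ hΦ₂ H).symm
  _ = subst Φ₂ (d⁄dX R Φ₁) * (d⁄dX R Φ₂ * H) := by rw [h₁, subst_mul hΦ₂, h₂]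
  _ = d⁄dX R (subst Φ₂ Φ₁) * H := by rw [derivative_subst hΦ₂, mul_assoc]

theorem SolvesAczelJabotinsky.of_subst_eq_X (hΦ : HasSubst Φ) (hΨ : HasSubst Ψ)
    (h : SolvesAczelJabotinsky H Φ) (hΦΨ : subst Ψ Φ = X) :
    SolvesAczelJabotinsky H Ψ := by
  have hH : subst Ψ (d⁄dX R Φ) * subst Ψ H = H := by
    rw [← subst_mul hΨ, ← h, subst_comp_subst_apply hΦ hΨ, hΦΨ, X_subst]
  have hchain : subst Ψ (d⁄dX R Φ) * d⁄dX R Ψ = 1 := by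
    rw [← derivative_subst hΨ, hΦΨ, derivative_X]
  calc subst Ψ H = (subst Ψ (d⁄dX R Φ) * d⁄dX R Ψ) * subst Ψ H := by rw [hchain, one_mul]
    _ = d⁄dX R Ψ * (subst Ψ (d⁄dX R Φ) * subst Ψ H) := by ring
    _ = d⁄dX R Ψ * H := by rw [hH]

end SolvesAczelJabotinsky

section Comp

variable {K : Type*} [Field K]

theorem coeff_comp (f g : K⟦X⟧) (m : ℕ) :
    coeff m (comp f g) = ∑ n ∈ Finset.range (m + 1), coeff n f * coeff m (g ^ n) :=
  coeff_mk _ _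

theorem constantCoeff_comp (f g : K⟦X⟧) : constantCoeff (comp f g) = constantCoeff f := by
  simp [← coeff_zero_eq_constantCoeff, coeff_comp]

theorem coeff_one_comp (f g : K⟦X⟧) : coeff 1 (comp f g) = coeff 1 f * coeff 1 g := by
  simp [coeff_comp, Finset.sum_range_succ, coeff_one]

theorem comp_eq_subst (f : K⟦X⟧) {g : K⟦X⟧} (hg : constantCoeff g = 0) :
    comp f g = subst g f := by
  ext m
  rw [coeff_comp, coeff_subst' (.of_constantCoeff_zero' hg)]
  refine (finsum_eq_sum_of_support_subset _ fun n hn => ?_).symm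
  by_contra hnm
  have hlt : m < n := by simpa using hnm
  refine hn (mul_eq_zero_of_right _ (coeff_of_lt_order m ?_))
  exact (le_order_pow_of_constantCoeff_eq_zero n hg).trans_lt' (by exact_mod_cast hlt)

theorem solvesAczelJabotinsky_iff_comp {H Φ : K⟦X⟧} (hΦ : constantCoeff Φ = 0) :
    SolvesAczelJabotinsky H Φ ↔ comp H Φ = derivativeFun Φ * H := by
  rw [comp_eq_subst H hΦ]
  rfl

end Comp

theorem aczel_jabotinsky_solutions_group_general (H : PowerSeries k) :
    (∀ Φ₁ Φ₂ : PowerSeries k,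
      constantCoeff Φ₁ = 0 → coeff 1 Φ₁ ≠ 0 →
      constantCoeff Φ₂ = 0 → coeff 1 Φ₂ ≠ 0 →
      comp H Φ₁ = derivativeFun Φ₁ * H →
      comp H Φ₂ = derivativeFun Φ₂ * H →
      (constantCoeff (comp Φ₁ Φ₂) = 0 ∧ coeff 1 (comp Φ₁ Φ₂) ≠ 0) ∧
        comp H (comp Φ₁ Φ₂) = derivativeFun (comp Φ₁ Φ₂) * H) ∧
    (∀ Φ Ψ : PowerSeries k,
      constantCoeff Φ = 0 → coeff 1 Φ ≠ 0 →
      comp H Φ = derivativeFun Φ * H →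
      comp Φ Ψ = X → comp Ψ Φ = X →
      comp H Ψ = derivativeFun Ψ * H) := by
  refine ⟨fun Φ₁ Φ₂ hΦ₁ h₁ hΦ₂ h₂ e₁ e₂ => ?_, fun Φ Ψ hΦ _ e hΦΨ hΨΦ => ?_⟩
  · have hcomp : constantCoeff (comp Φ₁ Φ₂) = 0 := by rw [constantCoeff_comp, hΦ₁]
    refine ⟨⟨hcomp, by rw [coeff_one_comp]; exact mul_ne_zero h₁ h₂⟩, ?_⟩
    rw [← solvesAczelJabotinsky_iff_comp hcomp, comp_eq_subst Φ₁ hΦ₂]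
    exact ((solvesAczelJabotinsky_iff_comp hΦ₁).2 e₁).comp (.of_constantCoeff_zero' hΦ₁)
      (.of_constantCoeff_zero' hΦ₂) ((solvesAczelJabotinsky_iff_comp hΦ₂).2 e₂)
  · have hΨ : constantCoeff Ψ = 0 := by
      simpa [constantCoeff_comp] using congrArg constantCoeff hΨΦ
    rw [← solvesAczelJabotinsky_iff_comp hΨ]
    exact ((solvesAczelJabotinsky_iff_comp hΦ).2 e).of_subst_eq_X (.of_constantCoeff_zero' hΦ)
      (.of_constantCoeff_zero' hΨ) (by rwa [← comp_eq_subst Φ hΨ])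

/-- The set of order-1 solutions of the third Aczél–Jabotinsky equation
`H ∘ Φ = Φ′ · H` is closed under substitution and under compositional inverses,
hence is a group under substitution. -/
theorem aczel_jabotinsky_solutions_group (H : PowerSeries k) (hH : H ≠ 0) :
    (∀ Φ₁ Φ₂ : PowerSeries k,
      constantCoeff Φ₁ = 0 → coeff 1 Φ₁ ≠ 0 →
      constantCoeff Φ₂ = 0 → coeff 1 Φ₂ ≠ 0 →
      comp H Φ₁ = derivativeFun Φ₁ * H →
      comp H Φ₂ = derivativeFun Φ₂ * H →
      (constantCoeff (comp Φ₁ Φ₂) = 0 ∧ coeff 1 (comp Φ₁ Φ₂) ≠ 0) ∧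
        comp H (comp Φ₁ Φ₂) = derivativeFun (comp Φ₁ Φ₂) * H) ∧
    (∀ Φ Ψ : PowerSeries k,
      constantCoeff Φ = 0 → coeff 1 Φ ≠ 0 →
      comp H Φ = derivativeFun Φ * H →
      comp Φ Ψ = X → comp Ψ Φ = X →
      comp H Ψ = derivativeFun Ψ * H) :=
  aczel_jabotinsky_solutions_group_general H
end

section
/- Let H ∈ k⟦X⟧ and let T ∈ k⟦X⟧ satisfy: constant coefficient of T is 0 and coefficient of X in T is 1 (so T′ is a unit in k⟦X⟧ and T has a compositional inverse T^{∘−1}). Define H̃ = (T′)⁻¹·(H∘T). Then a power series Φ of order 1 satisfies H∘Φ = Φ′·H if and only if Φ̃ := T^{∘−1}∘Φ∘T satisfies H̃∘Φ̃ = Φ̃′·H̃. -/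
open PowerSeries

variable {k : Type*} [Field k] [CharZero k]

/-!
Conjugation by `T` is compatible with the chain rule: if `T ∘ ψ = Φ ∘ T` and
`T' · H̃ = H ∘ T`, then composing `H ∘ Φ = Φ' · H` on the right with `T` gives
`(T' ∘ ψ) · (H̃ ∘ ψ) = (T' ∘ ψ) · ψ' · H̃`. Since `T' ∘ ψ` is a unit and composition with `T`
is injective (it has the left inverse `· ∘ T⁻¹`), the two equations are equivalent.
-/

section Conjugation

variable {R : Type*} [CommRing R]

theorem leftInverse_subst_of_subst_eq_X {T S : R⟦X⟧} (hT : HasSubst T) (hS : HasSubst S)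
    (hTS : subst S T = X) :
    Function.LeftInverse (fun f : R⟦X⟧ => subst S f) (fun f : R⟦X⟧ => subst T f) := fun f => by
  dsimp only
  rw [subst_comp_subst_apply hT hS, hTS, X_subst]

theorem subst_subst_subst_of_subst_eq_X {T S Φ : R⟦X⟧} (hT : HasSubst T) (hS : HasSubst S)
    (hΦ : HasSubst Φ) (hTS : subst S T = X) :
    subst (subst T (subst Φ S)) T = subst T Φ := by
  have hSΦ : HasSubst (subst Φ S) := by simpa [coe_substAlgHom] using hS.comp hΦ
  rw [← subst_comp_subst_apply hSΦ hT, ← subst_comp_subst_apply hS hΦ, hTS, subst_X hΦ]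

theorem subst_eq_derivative_mul_iff_of_subst_eq_subst {H H' T S Φ ψ : R⟦X⟧}
    (hT : HasSubst T) (hS : HasSubst S) (hΦ : HasSubst Φ) (hψ : HasSubst ψ)
    (hTS : subst S T = X) (hT' : IsUnit (d⁄dX R T)) (hH' : d⁄dX R T * H' = subst T H)
    (hTψ : subst ψ T = subst T Φ) :
    subst Φ H = d⁄dX R Φ * H ↔ subst ψ H' = d⁄dX R ψ * H' := by
  have hunit : IsUnit (subst ψ (d⁄dX R T)) := by
    rw [← coe_substAlgHom hψ]
    exact hT'.map _
  have hlhs : subst T (subst Φ H) = subst ψ (d⁄dX R T) * subst ψ H' := by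
    rw [subst_comp_subst_apply hΦ hT, ← hTψ, ← subst_comp_subst_apply hT hψ, ← hH',
      subst_mul hψ]
  have hrhs : subst T (d⁄dX R Φ * H) = subst ψ (d⁄dX R T) * (d⁄dX R ψ * H') := by
    rw [subst_mul hT, ← hH', ← mul_assoc, ← derivative_subst hT, ← hTψ, derivative_subst hψ,
      mul_assoc]
  rw [← (leftInverse_subst_of_subst_eq_X hT hS hTS).injective.eq_iff, hlhs, hrhs,
    hunit.mul_right_inj]

end Conjugation

set_option linter.deprecated false in
theorem derivativeFun_eq_derivative {R : Type*} [CommSemiring R] (f : R⟦X⟧) :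
    derivativeFun f = d⁄dX R f :=
  rfl

theorem aczel_jabotinsky_conjugation_general (H T Tinv : PowerSeries k)
    (hT0 : constantCoeff T = 0) (hT1 : coeff 1 T = 1)
    (hTTinv : comp T Tinv = X) (hTinvT : comp Tinv T = X)
    (Φ : PowerSeries k) (hΦ0 : constantCoeff Φ = 0) :
    comp H Φ = derivativeFun Φ * H ↔
      comp ((derivativeFun T)⁻¹ * comp H T) (comp (comp Tinv Φ) T)
        = derivativeFun (comp (comp Tinv Φ) T)
            * ((derivativeFun T)⁻¹ * comp H T) := by
  have hTinv0 : constantCoeff Tinv = 0 := by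
    rw [← constantCoeff_comp Tinv T, hTinvT, constantCoeff_X]
  have hT : HasSubst T := .of_constantCoeff_zero' hT0
  have hTinv : HasSubst Tinv := .of_constantCoeff_zero' hTinv0
  have hΦ : HasSubst Φ := .of_constantCoeff_zero' hΦ0
  have hTTinv' : subst Tinv T = X := by rw [← comp_eq_subst _ hTinv0, hTTinv]
  have hT' : constantCoeff (d⁄dX k T) ≠ 0 := by
    simp [← coeff_zero_eq_constantCoeff_apply, coeff_derivative, hT1]
  set ψ := comp (comp Tinv Φ) T with hψ
  have hψ0 : constantCoeff ψ = 0 := by rw [hψ, constantCoeff_comp, constantCoeff_comp, hTinv0]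
  have hTψ : subst ψ T = subst T Φ := by
    rw [hψ, comp_eq_subst _ hT0, comp_eq_subst _ hΦ0]
    exact subst_subst_subst_of_subst_eq_X hT hTinv hΦ hTTinv'
  simp only [derivativeFun_eq_derivative]
  rw [comp_eq_subst _ hψ0, comp_eq_subst _ hΦ0, comp_eq_subst _ hT0]
  exact subst_eq_derivative_mul_iff_of_subst_eq_subst hT hTinv hΦ (.of_constantCoeff_zero' hψ0)
    hTTinv' (isUnit_iff_constantCoeff.2 hT'.isUnit)
    (by rw [← mul_assoc, PowerSeries.mul_inv_cancel _ hT', one_mul]) hTψ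

/-- Conjugating by a normalized `T` (with compositional inverse `Tinv`)
transforms the Aczél–Jabotinsky equation with generator `H` into the one
with generator `H̃ = (T′)⁻¹ · (H ∘ T)`. -/
theorem aczel_jabotinsky_conjugation (H T Tinv : PowerSeries k)
    (hT0 : constantCoeff T = 0) (hT1 : coeff 1 T = 1)
    (hTTinv : comp T Tinv = X) (hTinvT : comp Tinv T = X)
    (Φ : PowerSeries k) (hΦ0 : constantCoeff Φ = 0) (hΦ1 : coeff 1 Φ ≠ 0) :
    comp H Φ = derivativeFun Φ * H ↔
      comp ((derivativeFun T)⁻¹ * comp H T) (comp (comp Tinv Φ) T)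
        = derivativeFun (comp (comp Tinv Φ) T)
            * ((derivativeFun T)⁻¹ * comp H T) :=
  aczel_jabotinsky_conjugation_general H T Tinv hT0 hT1 hTTinv hTinvT Φ hΦ0
end

section
/- Let l ≥ 1 be an integer and let H ∈ k⟦X⟧ have coefficient 0 of X^j for all j ≤ l, coefficient 1 of X^{l+1} (i.e. H = X^{l+1} + Σ_{i≥l+2} h_i X^i). Then there exist T ∈ k⟦X⟧ with constant coefficient 0 and coefficient of X equal to 1, and δ ∈ k, such that H∘T = T′·(X^{l+1} + δ·X^{2l+1}). -/
/-!
Write `W = X^(l+1) + δ X^(2l+1)` and build `T = X + t₂ X² + t₃ X³ + ⋯` one coefficient at a time.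
If `T` already solves `H ∘ T = T′ · W` modulo `X^(l+n+2)`, adding `c X^(n+2)` to `T` leaves the
lower coefficients of `H ∘ T - T′ · W` alone and shifts its coefficient of `X^(l+n+2)` by
`(l+1) c - (n+2) c = (l - n - 1) c`. So every step can be solved except the resonant one
`n + 1 = l`, in degree `2l+1`. The approximations built before it do not involve `δ`, and the
term `δ X^(2l+1) T′` contributes exactly `-δ` in that degree, so `δ` is chosen to cancel it.
The approximations converge `X`-adically to an exact solution.
-/

open PowerSeries

variable {k : Type*} [Field k] [CharZero k]

theorem pow_add_dvd_pow_sub_pow {R : Type*} [CommRing R] {x a b : R} {n : ℕ} (ha : x ∣ a)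
    (hab : x ^ (n + 1) ∣ b - a) : ∀ j, x ^ (n + j) ∣ b ^ j - a ^ j
  | 0 => by simp
  | j + 1 => by
    have hb : x ∣ b := by simpa using ha.add ((dvd_pow_self x n.succ_ne_zero).trans hab)
    rw [show b ^ (j + 1) - a ^ (j + 1) = b * (b ^ j - a ^ j) + (b - a) * a ^ j by ring]
    refine dvd_add ?_ ?_
    · rw [show n + (j + 1) = 1 + (n + j) by ring, pow_add, pow_one]
      exact mul_dvd_mul hb (pow_add_dvd_pow_sub_pow ha hab j)
    · rw [show n + (j + 1) = (n + 1) + j by ring, pow_add]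
      exact mul_dvd_mul hab (pow_dvd_pow_of_dvd ha j)

namespace PowerSeries

section CommSemiring

variable {R : Type*} [CommSemiring R]

theorem coeff_add_mul_of_X_pow_dvd {F G : R⟦X⟧} {a b : ℕ} (hF : X ^ a ∣ F) (hG : X ^ b ∣ G) :
    coeff (a + b) (F * G) = coeff a F * coeff b G := by
  obtain ⟨F₀, rfl⟩ := hF
  obtain ⟨G₀, rfl⟩ := hG
  rw [show X ^ a * F₀ * (X ^ b * G₀) = X ^ (a + b) * (F₀ * G₀) by ring]
  simp [coeff_X_pow_mul']

theorem coeff_pow_self_of_X_dvd {F : R⟦X⟧} (hF : X ∣ F) : ∀ m, coeff m (F ^ m) = coeff 1 F ^ m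
  | 0 => by simp
  | m + 1 => by
    rw [pow_succ', add_comm m, coeff_add_mul_of_X_pow_dvd (a := 1) (by rwa [pow_one])
      (pow_dvd_pow_of_dvd hF m), coeff_pow_self_of_X_dvd hF m, add_comm, pow_succ']

theorem X_pow_dvd_derivative {F : R⟦X⟧} {n : ℕ} (hF : X ^ (n + 1) ∣ F) :
    (X : R⟦X⟧) ^ n ∣ d⁄dX R F :=
  X_pow_dvd_iff.mpr fun m hm => by
    rw [coeff_derivative, X_pow_dvd_iff.mp hF (m + 1) (by omega), zero_mul]

end CommSemiring

section CommRing

variable {R : Type*} [CommRing R]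

theorem X_pow_succ_dvd_iff {F : R⟦X⟧} {n : ℕ} :
    X ^ (n + 1) ∣ F ↔ X ^ n ∣ F ∧ coeff n F = 0 := by
  simp only [X_pow_dvd_iff, Nat.lt_succ_iff_lt_or_eq, or_imp, forall_and, forall_eq]

theorem X_pow_succ_dvd_sub_X_pow_iff {F : R⟦X⟧} {n : ℕ} :
    X ^ (n + 1) ∣ F - X ^ n ↔ X ^ n ∣ F ∧ coeff n F = 1 := by
  rw [X_pow_succ_dvd_iff, dvd_sub_left dvd_rfl, map_sub, coeff_X_pow_self, sub_eq_zero]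

theorem X_sq_dvd_sub_X_iff {F : R⟦X⟧} : X ^ 2 ∣ F - X ↔ X ∣ F ∧ coeff 1 F = 1 := by
  simpa using X_pow_succ_dvd_sub_X_pow_iff (F := F) (n := 1)

theorem coeff_pow_succ_sub_pow_succ {F G : R⟦X⟧} {n : ℕ} (hF : X ∣ F)
    (hGF : X ^ (n + 2) ∣ G - F) : ∀ m : ℕ,
    coeff (n + m + 2) (G ^ (m + 1) - F ^ (m + 1)) = (m + 1) * coeff (n + 2) (G - F) * coeff 1 F ^ m
  | 0 => by simp
  | m + 1 => by
    have hG1 : coeff 1 G = coeff 1 F := by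
      rw [← sub_eq_zero, ← map_sub]
      exact X_pow_dvd_iff.mp hGF 1 (by omega)
    have hG : X ∣ G := by
      simpa using ((dvd_pow_self X (n + 1).succ_ne_zero).trans hGF).add hF
    have hdiff : X ^ (n + m + 2) ∣ G ^ (m + 1) - F ^ (m + 1) := by
      convert pow_add_dvd_pow_sub_pow (n := n + 1) hF hGF (m + 1) using 2
      ring
    rw [show G ^ (m + 1 + 1) - F ^ (m + 1 + 1) = G * (G ^ (m + 1) - F ^ (m + 1))
        + (G - F) * F ^ (m + 1) by ring, map_add,
      show n + (m + 1) + 2 = 1 + (n + m + 2) by ring,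
      coeff_add_mul_of_X_pow_dvd (a := 1) (by rwa [pow_one]) hdiff,
      coeff_pow_succ_sub_pow_succ hF hGF m,
      show 1 + (n + m + 2) = (n + 2) + (m + 1) by ring,
      coeff_add_mul_of_X_pow_dvd hGF (pow_dvd_pow_of_dvd hF _), coeff_pow_self_of_X_dvd hF, hG1]
    push_cast
    ring

theorem coeff_eq_of_X_pow_dvd_succ_sub {S : ℕ → R⟦X⟧} (hS : ∀ n, X ^ (n + 1) ∣ S (n + 1) - S n)
    {j a b : ℕ} (hj : j ≤ a) (hab : a ≤ b) : coeff j (S b) = coeff j (S a) := by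
  induction b, hab using Nat.le_induction with
  | base => rfl
  | succ b hab ih =>
    rw [← ih, ← sub_eq_zero, ← map_sub]
    exact X_pow_dvd_iff.mp (hS b) j (by omega)

theorem X_pow_dvd_mk_coeff_sub {S : ℕ → R⟦X⟧} (hS : ∀ n, X ^ (n + 1) ∣ S (n + 1) - S n) (n : ℕ) :
    X ^ (n + 1) ∣ mk (fun j => coeff j (S j)) - S n :=
  X_pow_dvd_iff.mpr fun j hj => by
    rw [map_sub, coeff_mk, coeff_eq_of_X_pow_dvd_succ_sub hS le_rfl (by omega : j ≤ n), sub_self]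

end CommRing

end PowerSeries

section Field

variable {K : Type*} [Field K]

theorem comp_X (f : K⟦X⟧) : comp f X = f := by
  ext m
  simp [comp, coeff_X_pow]

theorem coeff_comp_sub_comp (H F G : K⟦X⟧) (m : ℕ) :
    coeff m (comp H G - comp H F) =
      ∑ j ∈ Finset.range (m + 1), coeff j H * coeff m (G ^ j - F ^ j) := by
  simp only [comp, map_sub, coeff_mk, mul_sub, Finset.sum_sub_distrib]

theorem X_pow_dvd_comp_sub_comp {l n : ℕ} {H F G : K⟦X⟧} (hH : X ^ (l + 1) ∣ H) (hF : X ∣ F)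
    (hGF : X ^ (n + 1) ∣ G - F) : X ^ (l + n + 1) ∣ comp H G - comp H F :=
  X_pow_dvd_iff.mpr fun m hm => by
    rw [coeff_comp_sub_comp]
    refine Finset.sum_eq_zero fun j _ => ?_
    rcases le_or_gt j l with hj | hj
    · rw [X_pow_dvd_iff.mp hH j (by omega), zero_mul]
    · rw [X_pow_dvd_iff.mp (pow_add_dvd_pow_sub_pow hF hGF j) m (by omega), mul_zero]

theorem coeff_comp_sub_comp_of_X_pow_dvd {l n : ℕ} {H F G : K⟦X⟧}
    (hH : X ^ (l + 2) ∣ H - X ^ (l + 1)) (hF : X ^ 2 ∣ F - X) (hGF : X ^ (n + 2) ∣ G - F) :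
    coeff (l + n + 2) (comp H G - comp H F) = (l + 1) * coeff (n + 2) (G - F) := by
  obtain ⟨hHlow, hHlead⟩ := X_pow_succ_dvd_sub_X_pow_iff.mp hH
  obtain ⟨hF0, hF1⟩ := X_sq_dvd_sub_X_iff.mp hF
  rw [coeff_comp_sub_comp, Finset.sum_eq_single (l + 1)]
  · rw [hHlead, one_mul, show l + n + 2 = n + l + 2 by ring,
      coeff_pow_succ_sub_pow_succ hF0 hGF, hF1, one_pow, mul_one]
  · intro j _ hj
    rcases lt_or_gt_of_ne hj with hj | hj
    · rw [X_pow_dvd_iff.mp hHlow j hj, zero_mul]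
    · rw [X_pow_dvd_iff.mp (pow_add_dvd_pow_sub_pow (n := n + 1) hF0 hGF j) _ (by omega),
        mul_zero]
  · exact fun h => absurd (Finset.mem_range.mpr (by omega)) h

end Field

namespace AczelJabotinsky

noncomputable def normalForm {R : Type*} [CommSemiring R] (l : ℕ) (δ : R) : R⟦X⟧ :=
  X ^ (l + 1) + C δ * X ^ (2 * l + 1)

theorem X_pow_dvd_normalForm_sub {R : Type*} [CommRing R] {l : ℕ} (hl : 1 ≤ l) (δ : R) :
    X ^ (l + 2) ∣ normalForm l δ - X ^ (l + 1) := by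
  rw [normalForm, add_sub_cancel_left]
  exact dvd_mul_of_dvd_right (pow_dvd_pow X (by omega)) _

variable {K : Type*} [Field K]

noncomputable def defect (H W F : K⟦X⟧) : K⟦X⟧ :=
  comp H F - d⁄dX K F * W

theorem defect_sub_defect (H W F G : K⟦X⟧) :
    defect H W G - defect H W F = (comp H G - comp H F) - d⁄dX K (G - F) * W := by
  rw [defect, defect, map_sub]
  ring

theorem defect_sub_defect_right (H W W' F : K⟦X⟧) :
    defect H W F - defect H W' F = d⁄dX K F * (W' - W) := by
  rw [defect, defect]
  ring

theorem defect_X (H W : K⟦X⟧) : defect H W X = H - W := by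
  rw [defect, comp_X, derivative_X, one_mul]

theorem X_pow_dvd_defect_sub_defect {l n : ℕ} {H W F G : K⟦X⟧} (hH : X ^ (l + 1) ∣ H)
    (hW : X ^ (l + 1) ∣ W) (hF : X ∣ F) (hGF : X ^ (n + 1) ∣ G - F) :
    X ^ (l + n + 1) ∣ defect H W G - defect H W F := by
  rw [defect_sub_defect]
  refine dvd_sub (X_pow_dvd_comp_sub_comp hH hF hGF) ?_
  rw [show l + n + 1 = n + (l + 1) by ring, pow_add]
  exact mul_dvd_mul (X_pow_dvd_derivative hGF) hW

theorem coeff_defect_sub_defect {l n : ℕ} {H W F G : K⟦X⟧} (hH : X ^ (l + 2) ∣ H - X ^ (l + 1))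
    (hW : X ^ (l + 2) ∣ W - X ^ (l + 1)) (hF : X ^ 2 ∣ F - X) (hGF : X ^ (n + 2) ∣ G - F) :
    coeff (l + n + 2) (defect H W G - defect H W F) =
      ((l : K) - (n + 1)) * coeff (n + 2) (G - F) := by
  obtain ⟨hWlow, hWlead⟩ := X_pow_succ_dvd_sub_X_pow_iff.mp hW
  rw [defect_sub_defect, map_sub, coeff_comp_sub_comp_of_X_pow_dvd hH hF hGF,
    show l + n + 2 = (n + 1) + (l + 1) by ring,
    coeff_add_mul_of_X_pow_dvd (X_pow_dvd_derivative hGF) hWlow, hWlead, coeff_derivative]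
  push_cast
  ring

/-- At the resonant step `n + 1 = l` the denominator vanishes and `x / 0 = 0` makes the
correction zero. -/
noncomputable def approx (l : ℕ) (H W : K⟦X⟧) : ℕ → K⟦X⟧
  | 0 => X
  | n + 1 => approx l H W n +
      C (coeff (l + n + 2) (defect H W (approx l H W n)) / ((n : K) + 1 - l)) * X ^ (n + 2)

variable {l : ℕ} {H W : K⟦X⟧}

theorem approx_succ_sub (n : ℕ) : approx l H W (n + 1) - approx l H W n =
    C (coeff (l + n + 2) (defect H W (approx l H W n)) / ((n : K) + 1 - l)) * X ^ (n + 2) := by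
  rw [approx, add_sub_cancel_left]

theorem X_pow_dvd_approx_succ_sub (n : ℕ) :
    X ^ (n + 2) ∣ approx l H W (n + 1) - approx l H W n := by
  rw [approx_succ_sub]
  exact dvd_mul_left _ _

theorem X_sq_dvd_approx_sub_X : ∀ n, X ^ 2 ∣ approx l H W n - X
  | 0 => by simp [approx]
  | n + 1 => by
    rw [← sub_add_sub_cancel _ (approx l H W n)]
    exact dvd_add ((pow_dvd_pow X (by omega)).trans (X_pow_dvd_approx_succ_sub n))
      (X_sq_dvd_approx_sub_X n)

theorem approx_eq_of_X_pow_dvd_sub {W' : K⟦X⟧} (hW : X ^ (2 * l + 1) ∣ W - W') :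
    ∀ n < l, approx l H W n = approx l H W' n
  | 0, _ => rfl
  | n + 1, hn => by
    have hdefect :
        X ^ (2 * l + 1) ∣ defect H W (approx l H W n) - defect H W' (approx l H W n) := by
      rw [defect_sub_defect_right]
      exact (dvd_sub_comm.mp hW).mul_left _
    have hcoeff : coeff (l + n + 2) (defect H W (approx l H W n)) =
        coeff (l + n + 2) (defect H W' (approx l H W n)) := by
      rw [← sub_eq_zero, ← map_sub]
      exact X_pow_dvd_iff.mp hdefect _ (by omega)
    rw [approx, approx, ← approx_eq_of_X_pow_dvd_sub hW n (by omega), hcoeff]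

theorem X_pow_dvd_defect_approx [CharZero K] (hH : X ^ (l + 2) ∣ H - X ^ (l + 1))
    (hW : X ^ (l + 2) ∣ W - X ^ (l + 1))
    (hres : coeff (2 * l + 1) (defect H W (approx l H W (l - 1))) = 0) :
    ∀ n, X ^ (l + n + 2) ∣ defect H W (approx l H W n)
  | 0 => by
    rw [approx, defect_X, ← sub_sub_sub_cancel_right H W (X ^ (l + 1))]
    exact dvd_sub hH hW
  | n + 1 => by
    set F := approx l H W n
    set G := approx l H W (n + 1)
    have hGF : X ^ (n + 2) ∣ G - F := X_pow_dvd_approx_succ_sub n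
    have hF : X ^ 2 ∣ F - X := X_sq_dvd_approx_sub_X n
    have hprev := X_pow_dvd_defect_approx hH hW hres n
    have hclose : X ^ (l + n + 2) ∣ defect H W G - defect H W F :=
      X_pow_dvd_defect_sub_defect (l := l) (n := n + 1) (X_pow_succ_dvd_sub_X_pow_iff.mp hH).1
        (X_pow_succ_dvd_sub_X_pow_iff.mp hW).1 (X_sq_dvd_sub_X_iff.mp hF).1 hGF
    rw [show l + (n + 1) + 2 = l + n + 2 + 1 by ring, X_pow_succ_dvd_iff,
      ← sub_add_cancel (defect H W G) (defect H W F)]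
    refine ⟨dvd_add hclose hprev, ?_⟩
    rw [map_add, coeff_defect_sub_defect hH hW hF hGF, approx_succ_sub, coeff_C_mul_X_pow,
      if_pos rfl]
    by_cases hden : (n : K) + 1 - l = 0
    · have hl : n + 1 = l := Nat.cast_injective (R := K) (by push_cast; linear_combination hden)
      subst hl
      rw [hden, div_zero, mul_zero, zero_add]
      rwa [Nat.add_sub_cancel, show 2 * (n + 1) + 1 = n + 1 + n + 2 by ring] at hres
    · field_simp
      ring

variable (l H) in
noncomputable def resonantCoeff : K :=
  coeff (2 * l + 1) (defect H (X ^ (l + 1)) (approx l H (X ^ (l + 1)) (l - 1)))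

theorem coeff_defect_approx_normalForm_resonantCoeff (hl : 1 ≤ l) :
    coeff (2 * l + 1) (defect H (normalForm l (resonantCoeff l H))
      (approx l H (normalForm l (resonantCoeff l H)) (l - 1))) = 0 := by
  set δ := resonantCoeff l H
  set F := approx l H (X ^ (l + 1)) (l - 1)
  have hF : approx l H (normalForm l δ) (l - 1) = F :=
    approx_eq_of_X_pow_dvd_sub (by simp [normalForm]) (l - 1) (by omega)
  have hF1 : coeff 1 F = 1 := (X_sq_dvd_sub_X_iff.mp (X_sq_dvd_approx_sub_X _)).2
  rw [hF, ← sub_add_cancel (defect H (normalForm l δ) F) (defect H (X ^ (l + 1)) F),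
    defect_sub_defect_right, map_add,
    show X ^ (l + 1) - normalForm l δ = -C δ * X ^ (2 * l + 1) by rw [normalForm]; ring]
  simp [← mul_assoc, coeff_mul_X_pow', coeff_derivative, hF1, δ, resonantCoeff, F]

variable (l H) in
noncomputable def normalizingMap : K⟦X⟧ :=
  mk fun j => coeff j (approx l H (normalForm l (resonantCoeff l H)) j)

theorem X_pow_dvd_normalizingMap_sub_approx (n : ℕ) :
    X ^ (n + 1) ∣ normalizingMap l H - approx l H (normalForm l (resonantCoeff l H)) n :=
  X_pow_dvd_mk_coeff_sub (fun m => (pow_dvd_pow X (by omega)).trans (X_pow_dvd_approx_succ_sub m)) n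

theorem X_sq_dvd_normalizingMap_sub_X : X ^ 2 ∣ normalizingMap l H - X := by
  rw [← sub_add_sub_cancel _ (approx l H (normalForm l (resonantCoeff l H)) 1)]
  exact dvd_add (X_pow_dvd_normalizingMap_sub_approx 1) (X_sq_dvd_approx_sub_X 1)

theorem defect_normalizingMap [CharZero K] (hl : 1 ≤ l) (hH : X ^ (l + 2) ∣ H - X ^ (l + 1)) :
    defect H (normalForm l (resonantCoeff l H)) (normalizingMap l H) = 0 := by
  set W := normalForm l (resonantCoeff l H)
  have hW : X ^ (l + 2) ∣ W - X ^ (l + 1) := X_pow_dvd_normalForm_sub hl _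
  have hdvd (n : ℕ) : X ^ (l + n + 1) ∣ defect H W (normalizingMap l H) := by
    rw [← sub_add_cancel (defect H W _) (defect H W (approx l H W n))]
    refine dvd_add (X_pow_dvd_defect_sub_defect (X_pow_succ_dvd_sub_X_pow_iff.mp hH).1
      (X_pow_succ_dvd_sub_X_pow_iff.mp hW).1 (X_sq_dvd_sub_X_iff.mp (X_sq_dvd_approx_sub_X n)).1
      (X_pow_dvd_normalizingMap_sub_approx n)) ?_
    exact (pow_dvd_pow X (by omega)).trans (X_pow_dvd_defect_approx hH hW
      (coeff_defect_approx_normalForm_resonantCoeff hl) n)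
  ext m
  exact X_pow_dvd_iff.mp (hdvd m) m (by omega)

end AczelJabotinsky

/-- Every generator `H = X^(l+1) + Σ_{i ≥ l+2} h_i X^i` can be brought to the
normal form `X^(l+1) + δ X^(2l+1)` by a normalized transformation `T`:
`H ∘ T = T′ · (X^(l+1) + δ X^(2l+1))`. -/
theorem aczel_jabotinsky_normal_form (l : ℕ) (hl : 1 ≤ l) (H : PowerSeries k)
    (hHlow : ∀ j, j ≤ l → coeff j H = 0)
    (hHlead : coeff (l + 1) H = 1) :
    ∃ T : PowerSeries k, ∃ δ : k,
      constantCoeff T = 0 ∧ coeff 1 T = 1 ∧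
      comp H T = derivativeFun T * (X ^ (l + 1) + C δ * X ^ (2 * l + 1)) := by
  have hH : X ^ (l + 2) ∣ H - X ^ (l + 1) :=
    X_pow_succ_dvd_sub_X_pow_iff.mpr ⟨X_pow_dvd_iff.mpr fun j hj => hHlow j (by omega), hHlead⟩
  obtain ⟨hT0, hT1⟩ := X_sq_dvd_sub_X_iff.mp
    (AczelJabotinsky.X_sq_dvd_normalizingMap_sub_X (l := l) (H := H))
  exact ⟨AczelJabotinsky.normalizingMap l H, AczelJabotinsky.resonantCoeff l H,
    X_dvd_iff.mp hT0, hT1, sub_eq_zero.mp (AczelJabotinsky.defect_normalizingMap hl hH)⟩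
end

section
/- Let H ∈ k⟦X⟧ have constant coefficient 0 and coefficient of X equal to 1 (i.e. H = X + Σ_{i≥2} h_i X^i). Then there exists a unique T ∈ k⟦X⟧ with constant coefficient 0 and coefficient of X equal to 1 such that H∘T = T′·X. -/
/-!
Compare coefficients of `X ^ m`. Since `h₀ = 0`, `h₁ = 1` and `T` has no constant term,
`[X ^ m] (H ∘ T) = t_m + ∑_{2 ≤ n ≤ m} h_n [X ^ m] T ^ n` while `[X ^ m] (T′ X) = m t_m`, and
`[X ^ m] T ^ n` for `n ≥ 2` only involves `t_1, …, t_{m-1}`. So the equation says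
`(m - 1) t_m = ∑_{2 ≤ n ≤ m} h_n [X ^ m] T ^ n`, which in characteristic zero determines `t_m`
for `m ≥ 2` from the earlier coefficients, while `t_0 = 0` and `t_1 = 1` are the normalization.
A recursion in which each value depends only on the earlier ones has exactly one solution.
-/

open PowerSeries

variable {k : Type*} [Field k] [CharZero k]

open Classical in
theorem WellFoundedLT.existsUnique_isFixedPt {ι α : Type*} [LT ι] [WellFoundedLT ι] [Nonempty α]
    (F : (ι → α) → ι → α) (hF : ∀ f g i, (∀ j < i, f j = g j) → F f i = F g i) :
    ∃! f, Function.IsFixedPt F f := by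
  set f : ι → α := WellFoundedLT.fix fun i rec =>
    F (fun j => if h : j < i then rec j h else Classical.arbitrary α) i with hf_def
  have hf : Function.IsFixedPt F f := funext fun i => by
    conv_rhs => rw [hf_def, WellFoundedLT.fix_eq]
    exact hF _ _ i fun j hj => by rw [dif_pos hj]
  refine ⟨f, hf, fun g hg => funext fun i => ?_⟩
  induction i using WellFoundedLT.induction with
  | _ i ih => rw [← hg, ← hf]; exact hF g f i ih

theorem pow_add_dvd_pow_succ_sub_pow_succ {R : Type*} [CommRing R] {x a b : R} {m : ℕ}
    (ha : x ∣ a) (hb : x ∣ b) (hab : x ^ m ∣ a - b) (n : ℕ) :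
    x ^ (m + n) ∣ a ^ (n + 1) - b ^ (n + 1) := by
  induction n with
  | zero => simpa using hab
  | succ n ih =>
    have h : a ^ (n + 2) - b ^ (n + 2) =
        a ^ (n + 1) * (a - b) + (a ^ (n + 1) - b ^ (n + 1)) * b := by ring
    rw [h, ← add_assoc, pow_succ]
    refine dvd_add ?_ (mul_dvd_mul ih hb)
    rw [show x ^ (m + n) * x = x ^ (n + 1) * x ^ m by ring]
    exact mul_dvd_mul (pow_dvd_pow_of_dvd ha _) hab

namespace PowerSeries

variable {R : Type*} [CommRing R]

theorem coeff_pow_succ_eq_of_coeff_eq {A B : R⟦X⟧} (hA : constantCoeff A = 0)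
    (hB : constantCoeff B = 0) {m : ℕ} (hAB : ∀ i < m, coeff i A = coeff i B) {n j : ℕ}
    (hj : j < m + n) : coeff j (A ^ (n + 1)) = coeff j (B ^ (n + 1)) := by
  have hdvd : X ^ m ∣ A - B := X_pow_dvd_iff.2 fun i hi => by rw [map_sub, hAB i hi, sub_self]
  rw [← sub_eq_zero, ← map_sub]
  exact X_pow_dvd_iff.1
    (pow_add_dvd_pow_succ_sub_pow_succ (X_dvd_iff.2 hA) (X_dvd_iff.2 hB) hdvd n) j hj

set_option linter.deprecated false in
theorem coeff_derivativeFun_mul_X (T : R⟦X⟧) (m : ℕ) :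
    coeff m (derivativeFun T * X) = m * coeff m T := by
  rcases m with _ | m
  · simp
  · rw [coeff_succ_mul_X, show derivativeFun T = derivative R T from rfl, coeff_derivative]
    push_cast
    ring

end PowerSeries

section NormalForm

variable {K : Type*} [Field K]

theorem coeff_zero_comp (H T : K⟦X⟧) : coeff 0 (comp H T) = constantCoeff H := by
  simp [comp]

theorem coeff_succ_comp {H : K⟦X⟧} (hH0 : constantCoeff H = 0) (hH1 : coeff 1 H = 1)
    (T : K⟦X⟧) (m : ℕ) :
    coeff (m + 1) (comp H T) =
      coeff (m + 1) T + ∑ n ∈ Finset.Icc 2 (m + 1), coeff n H * coeff (m + 1) (T ^ n) := by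
  rw [comp, coeff_mk, Finset.range_eq_Ico, Finset.sum_eq_sum_Ico_succ_bot (by omega),
    Finset.sum_eq_sum_Ico_succ_bot (by omega), Finset.Ico_add_one_right_eq_Icc]
  simp [hH0, hH1]

set_option linter.deprecated false in
theorem comp_eq_derivativeFun_mul_X_iff {H : K⟦X⟧} (hH0 : constantCoeff H = 0)
    (hH1 : coeff 1 H = 1) (T : K⟦X⟧) :
    comp H T = derivativeFun T * X ↔ ∀ m : ℕ,
      (m + 1 : K) * coeff (m + 2) T =
        ∑ n ∈ Finset.Icc 2 (m + 2), coeff n H * coeff (m + 2) (T ^ n) := by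
  rw [PowerSeries.ext_iff]
  refine ⟨fun h m => ?_, fun h m => ?_⟩
  · have hm := h (m + 2)
    rw [coeff_succ_comp hH0 hH1, coeff_derivativeFun_mul_X] at hm
    push_cast at hm
    linear_combination -hm
  · rcases m with _ | _ | m
    · simp [coeff_zero_comp, hH0]
    · rw [coeff_succ_comp hH0 hH1 T 0, coeff_derivativeFun_mul_X]
      simp
    · rw [coeff_succ_comp hH0 hH1, coeff_derivativeFun_mul_X]
      push_cast
      linear_combination -(h m)

/-- `f` enters only through `X * mk (f ∘ succ)`: its constant term is ignored, so that the
value at `m` depends only on `f` below `m`. -/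
noncomputable def normalFormRec (H : K⟦X⟧) (f : ℕ → K) : ℕ → K
  | 0 => 0
  | 1 => 1
  | m + 2 => (m + 1 : K)⁻¹ *
      ∑ n ∈ Finset.Icc 2 (m + 2), coeff n H * coeff (m + 2) ((X * mk fun i => f (i + 1)) ^ n)

theorem normalFormRec_congr (H : K⟦X⟧) {f g : ℕ → K} {m : ℕ} (hfg : ∀ i < m, f i = g i) :
    normalFormRec H f m = normalFormRec H g m := by
  rcases m with _ | _ | m
  · rfl
  · rfl
  · have hcoeff : ∀ i < m + 2,
        coeff i (X * mk fun i => f (i + 1)) = coeff i (X * mk fun i => g (i + 1)) := by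
      rintro (_ | i) hi
      · simp
      · simp [hfg (i + 1) hi]
    refine congrArg _ (Finset.sum_congr rfl fun n hn => ?_)
    obtain ⟨n, rfl⟩ : ∃ n', n = n' + 1 := ⟨n - 1, by grind⟩
    rw [coeff_pow_succ_eq_of_coeff_eq (by simp) (by simp) hcoeff (by grind)]

variable [CharZero K]

set_option linter.deprecated false in
theorem isFixedPt_normalFormRec_iff {H : K⟦X⟧} (hH0 : constantCoeff H = 0)
    (hH1 : coeff 1 H = 1) (T : K⟦X⟧) : Function.IsFixedPt (normalFormRec H) (fun i => coeff i T) ↔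
      constantCoeff T = 0 ∧ coeff 1 T = 1 ∧ comp H T = derivativeFun T * X := by
  have hshift (hT0 : constantCoeff T = 0) : (X * mk fun i => coeff (i + 1) T) = T := by
    simpa [hT0] using (eq_X_mul_shift_add_const T).symm
  have hstep (m : ℕ) (hT0 : constantCoeff T = 0) :
      normalFormRec H (fun i => coeff i T) (m + 2) = coeff (m + 2) T ↔
        (m + 1 : K) * coeff (m + 2) T =
          ∑ n ∈ Finset.Icc 2 (m + 2), coeff n H * coeff (m + 2) (T ^ n) := by
    rw [normalFormRec, hshift hT0, inv_mul_eq_iff_eq_mul₀ (Nat.cast_add_one_ne_zero m), eq_comm]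
  rw [comp_eq_derivativeFun_mul_X_iff hH0 hH1, Function.IsFixedPt, funext_iff]
  constructor
  · intro h
    have hT0 : constantCoeff T = 0 := by simpa [normalFormRec] using (h 0).symm
    exact ⟨hT0, (h 1).symm, fun m => (hstep m hT0).1 (h (m + 2))⟩
  · rintro ⟨hT0, hT1, h⟩ (_ | _ | m)
    · simpa [normalFormRec] using hT0.symm
    · exact hT1.symm
    · exact (hstep m hT0).2 (h m)

end NormalForm

/-- For a generator `H = X + Σ_{i ≥ 2} h_i X^i` there is a unique normalized `T`
with `H ∘ T = T′ · X`. -/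
theorem aczel_jabotinsky_normal_form_l_zero (H : PowerSeries k)
    (hH0 : constantCoeff H = 0) (hH1 : coeff 1 H = 1) :
    ∃! T : PowerSeries k,
      constantCoeff T = 0 ∧ coeff 1 T = 1 ∧
      comp H T = derivativeFun T * X := by
  obtain ⟨f, hf, hf_unique⟩ :=
    WellFoundedLT.existsUnique_isFixedPt (normalFormRec H) fun _ _ _ => normalFormRec_congr H
  refine ⟨mk f, (isFixedPt_normalFormRec_iff hH0 hH1 (mk f)).1 (by simpa using hf),
    fun T hT => ?_⟩
  ext i
  rw [coeff_mk, ← hf_unique _ ((isFixedPt_normalFormRec_iff hH0 hH1 T).2 hT)]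
end

section
/- Let s ≥ 2 be a natural number and let H ∈ k⟦X⟧ have constant coefficient 0 and coefficient of X equal to 1. Then for every c ∈ k with c ≠ 0 there exist unique c₂, …, c_s ∈ k such that the power series Φ = c·X + Σ_{n=2}^{s} c_n X^n satisfies H∘Φ ≡ Φ′·H mod X^{s+1}. -/
/-!
Write `E(Φ) = H ∘ Φ - Φ' * H`. If `X ∣ Φ` and `X ^ m ∣ D` with `m ≥ 1`, then `E(Φ + D) ≡ E(Φ)`
modulo `X ^ m`, and the coefficient of `X ^ m` changes by `(1 - m) * h₁ * D_m`: in `H ∘ (Φ + D)`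
only the linear term of `H` sees `D` in degree `m`, while `D' * H` contributes `m * D_m * h₁`.
The factor `1 - m` vanishes for `m = 1`, so `c₁ = c` is free, and it is invertible for `m ≥ 2`,
so `c₂, …, c_s` are forced one at a time: existence follows by induction on `s`, uniqueness by
looking at the lowest coefficient in which two solutions differ.
-/

open PowerSeries

variable {k : Type*} [Field k] [CharZero k]

namespace PowerSeries

variable {R : Type*}

theorem X_pow_succ_dvd_add_pow_sub_pow [CommRing R] {Φ D : R⟦X⟧} {m n : ℕ} (hΦ : X ∣ Φ)
    (hD : X ^ m ∣ D) (hm : m ≠ 0) (hn : 2 ≤ n) : X ^ (m + 1) ∣ (Φ + D) ^ n - Φ ^ n := by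
  rw [← geom_sum₂_mul, add_sub_cancel_left, pow_succ, mul_comm _ D]
  refine mul_dvd_mul hD (Finset.dvd_sum fun i _ => ?_)
  rcases Nat.eq_zero_or_pos i with rfl | hi0
  · exact (dvd_pow hΦ (by omega)).mul_left _
  · exact (dvd_pow (dvd_add hΦ ((dvd_pow_self X hm).trans hD)) hi0.ne').mul_right _

variable [CommSemiring R]

theorem X_pow_succ_dvd_of_X_pow_dvd {f : R⟦X⟧} {n : ℕ}
    (h : X ^ n ∣ f) (hn : coeff n f = 0) : X ^ (n + 1) ∣ f := by
  refine X_pow_dvd_iff.mpr fun j hj => ?_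
  rcases Nat.lt_succ_iff_lt_or_eq.mp hj with hj | rfl
  · exact X_pow_dvd_iff.mp h j hj
  · exact hn

theorem coeff_derivative_mul_of_X_pow_dvd {D H : R⟦X⟧} {m : ℕ}
    (hH : constantCoeff H = 0) (hD : X ^ m ∣ D) :
    coeff m (d⁄dX R D * H) = m * coeff m D * coeff 1 H := by
  rw [X_pow_dvd_iff] at hD
  rcases m with _ | m
  · simp [hH]
  rw [coeff_mul, Finset.sum_eq_single (m, 1)]
  · rw [coeff_derivative]; push_cast; ring
  · rintro ⟨i, j⟩ hij hne
    rw [Finset.HasAntidiagonal.mem_antidiagonal] at hij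
    rcases Nat.eq_zero_or_pos j with rfl | hj
    · simp [hH]
    · rw [coeff_derivative, hD (i + 1) (by grind), zero_mul, zero_mul]
  · simp

theorem X_pow_dvd_derivative_mul {D H : R⟦X⟧} {m : ℕ}
    (hH : constantCoeff H = 0) (hD : X ^ m ∣ D) : X ^ m ∣ d⁄dX R D * H := by
  refine X_pow_dvd_iff.mpr fun j hj => ?_
  rw [coeff_derivative_mul_of_X_pow_dvd hH ((pow_dvd_pow X hj.le).trans hD),
    X_pow_dvd_iff.mp hD j hj, mul_zero, zero_mul]

end PowerSeries

noncomputable def aczelJabotinskyDefect (H Φ : k⟦X⟧) : k⟦X⟧ :=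
  comp H Φ - d⁄dX k Φ * H

def IsTruncatedAczelJabotinskySolution (H : k⟦X⟧) (c : k) (s : ℕ) (Φ : k⟦X⟧) : Prop :=
  constantCoeff Φ = 0 ∧ coeff 1 Φ = c ∧ (∀ n, s < n → coeff n Φ = 0) ∧
    X ^ (s + 1) ∣ aczelJabotinskyDefect H Φ

section

omit [CharZero k]

theorem coeff_comp_eq_sum (f g : k⟦X⟧) (m : ℕ) :
    coeff m (comp f g) = ∑ n ∈ Finset.range (m + 1), coeff n f * coeff m (g ^ n) :=
  coeff_mk _ _

theorem X_pow_dvd_comp_sub_comp_s6 (f : k⟦X⟧) {Φ Ψ : k⟦X⟧} {m : ℕ} (h : X ^ m ∣ Φ - Ψ) :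
    X ^ m ∣ comp f Φ - comp f Ψ := by
  rw [X_pow_dvd_iff]
  intro j hj
  rw [map_sub, coeff_comp_eq_sum, coeff_comp_eq_sum, ← Finset.sum_sub_distrib]
  refine Finset.sum_eq_zero fun n _ => ?_
  rw [← mul_sub, ← map_sub, X_pow_dvd_iff.mp (h.trans (sub_dvd_pow_sub_pow Φ Ψ n)) j hj, mul_zero]

theorem coeff_comp_add_of_X_pow_dvd (f : k⟦X⟧) {Φ D : k⟦X⟧} {m : ℕ} (hΦ : X ∣ Φ)
    (hD : X ^ m ∣ D) (hm : m ≠ 0) :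
    coeff m (comp f (Φ + D)) = coeff m (comp f Φ) + coeff 1 f * coeff m D := by
  have hpow (n : ℕ) : coeff m ((Φ + D) ^ (n + 1 + 1)) = coeff m (Φ ^ (n + 1 + 1)) := by
    rw [← sub_eq_zero, ← map_sub]
    exact X_pow_dvd_iff.mp (X_pow_succ_dvd_add_pow_sub_pow hΦ hD hm (by omega)) m m.lt_succ_self
  obtain ⟨m, rfl⟩ := Nat.exists_eq_add_one_of_ne_zero hm
  simp only [coeff_comp_eq_sum, Finset.sum_range_succ' _ (m + 1), Finset.sum_range_succ' _ m,
    hpow, zero_add, pow_zero, pow_one, map_add]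
  ring

variable {H : k⟦X⟧}

theorem aczelJabotinskyDefect_zero (hH : constantCoeff H = 0) :
    aczelJabotinskyDefect H 0 = 0 := by
  ext m
  simp [aczelJabotinskyDefect, coeff_comp_eq_sum, zero_pow_eq, apply_ite (coeff m), coeff_one,
    hH]

theorem X_pow_dvd_aczelJabotinskyDefect_sub (hH : constantCoeff H = 0) {Φ Ψ : k⟦X⟧} {m : ℕ}
    (h : X ^ m ∣ Φ - Ψ) :
    X ^ m ∣ aczelJabotinskyDefect H Φ - aczelJabotinskyDefect H Ψ := by
  have hsplit : aczelJabotinskyDefect H Φ - aczelJabotinskyDefect H Ψ =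
      (comp H Φ - comp H Ψ) - d⁄dX k (Φ - Ψ) * H := by
    rw [aczelJabotinskyDefect, aczelJabotinskyDefect, map_sub]
    ring
  rw [hsplit]
  exact dvd_sub (X_pow_dvd_comp_sub_comp_s6 H h) (X_pow_dvd_derivative_mul hH h)

theorem coeff_aczelJabotinskyDefect_add (hH : constantCoeff H = 0) {Φ D : k⟦X⟧} {m : ℕ}
    (hΦ : X ∣ Φ) (hD : X ^ m ∣ D) (hm : m ≠ 0) :
    coeff m (aczelJabotinskyDefect H (Φ + D)) =
      coeff m (aczelJabotinskyDefect H Φ) + (1 - m) * coeff 1 H * coeff m D := by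
  simp only [aczelJabotinskyDefect, map_sub, map_add, add_mul,
    coeff_comp_add_of_X_pow_dvd H hΦ hD hm, coeff_derivative_mul_of_X_pow_dvd hH hD]
  ring

theorem X_pow_succ_dvd_aczelJabotinskyDefect_add_C_mul_X_pow (hH : constantCoeff H = 0)
    {Φ : k⟦X⟧} {m : ℕ} {a : k} (hΦ : X ∣ Φ) (hm : m ≠ 0)
    (hE : X ^ m ∣ aczelJabotinskyDefect H Φ)
    (ha : coeff m (aczelJabotinskyDefect H Φ) + (1 - m) * coeff 1 H * a = 0) :
    X ^ (m + 1) ∣ aczelJabotinskyDefect H (Φ + C a * X ^ m) := by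
  have hD : X ^ m ∣ C a * X ^ m := dvd_mul_left _ _
  refine X_pow_succ_dvd_of_X_pow_dvd ?_ ?_
  · refine (dvd_sub_left hE).mp (X_pow_dvd_aczelJabotinskyDefect_sub hH ?_)
    rwa [add_sub_cancel_left]
  · rwa [coeff_aczelJabotinskyDefect_add hH hΦ hD hm, coeff_C_mul_X_pow, if_pos rfl]

end

variable {H : k⟦X⟧}

theorem exists_isTruncatedAczelJabotinskySolution (hH0 : constantCoeff H = 0)
    (hH1 : coeff 1 H ≠ 0) (c : k) {s : ℕ} (hs : 1 ≤ s) :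
    ∃ Φ, IsTruncatedAczelJabotinskySolution H c s Φ := by
  induction s, hs using Nat.le_induction with
  | base =>
    refine ⟨C c * X, by simp, by simp, fun n hn => by simp [coeff_X, hn.ne'], ?_⟩
    simpa using X_pow_succ_dvd_aczelJabotinskyDefect_add_C_mul_X_pow hH0 (Φ := 0) (a := c)
      (dvd_zero X) one_ne_zero (by simp [aczelJabotinskyDefect_zero hH0])
      (by simp [aczelJabotinskyDefect_zero hH0])
  | succ s hs ih =>
    obtain ⟨Φ, hΦ0, hΦ1, hΦs, hΦE⟩ := ih
    have hs0 : (s : k) ≠ 0 := by exact_mod_cast (by omega : s ≠ 0)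
    refine ⟨Φ + C (coeff (s + 1) (aczelJabotinskyDefect H Φ) / (s * coeff 1 H)) * X ^ (s + 1),
      by simp [hΦ0], by simp [hΦ1, coeff_X_pow, Nat.one_le_iff_ne_zero.mp hs], fun n hn => ?_,
      X_pow_succ_dvd_aczelJabotinskyDefect_add_C_mul_X_pow hH0 (X_dvd_iff.mpr hΦ0) (by omega)
        hΦE ?_⟩
    · simp [hΦs n (by omega), coeff_X_pow, hn.ne']
    · push_cast
      field_simp
      ring

theorem IsTruncatedAczelJabotinskySolution.eq (hH0 : constantCoeff H = 0) (hH1 : coeff 1 H ≠ 0)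
    {c : k} {s : ℕ} {Φ Ψ : k⟦X⟧} (hΦ : IsTruncatedAczelJabotinskySolution H c s Φ)
    (hΨ : IsTruncatedAczelJabotinskySolution H c s Ψ) : Φ = Ψ := by
  by_contra hne
  set m := (Φ - Ψ).order.toNat
  have hDm : coeff m (Φ - Ψ) ≠ 0 := coeff_order (sub_ne_zero.mpr hne)
  have hm2 : 2 ≤ m := by
    by_contra! h
    interval_cases m
    · simp [hΦ.1, hΨ.1] at hDm
    · simp [hΦ.2.1, hΨ.2.1] at hDm
  have hms : m ≤ s := by
    by_contra! h
    simp [hΦ.2.2.1 m h, hΨ.2.2.1 m h] at hDm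
  have key := coeff_aczelJabotinskyDefect_add hH0 (D := Φ - Ψ) (X_dvd_iff.mpr hΨ.1)
    X_pow_order_dvd (by omega)
  have hms' : m < s + 1 := by omega
  rw [add_sub_cancel, X_pow_dvd_iff.mp hΦ.2.2.2 m hms', X_pow_dvd_iff.mp hΨ.2.2.2 m hms',
    zero_add, eq_comm] at key
  have hm1 : (1 - m : k) ≠ 0 := sub_ne_zero.mpr (by exact_mod_cast (by omega : 1 ≠ m))
  exact mul_ne_zero (mul_ne_zero hm1 hH1) hDm key

theorem aczel_jabotinsky_truncated_unique_solution_general (H : PowerSeries k)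
    (hH0 : constantCoeff H = 0) (hH1 : coeff 1 H = 1)
    (s : ℕ) (hs : 2 ≤ s) (c : k) :
    ∃! Φ : PowerSeries k,
      constantCoeff Φ = 0 ∧ coeff 1 Φ = c ∧
      (∀ n, s < n → coeff n Φ = 0) ∧
      (X : PowerSeries k) ^ (s + 1) ∣ comp H Φ - derivativeFun Φ * H := by
  have hH1' : coeff 1 H ≠ 0 := by simp [hH1]
  obtain ⟨Φ, hΦ⟩ := exists_isTruncatedAczelJabotinskySolution hH0 hH1' c (by omega : 1 ≤ s)
  exact ⟨Φ, hΦ, fun Ψ hΨ => IsTruncatedAczelJabotinskySolution.eq hH0 hH1' hΨ hΦ⟩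

/-- For a generator `H = X + Σ h_i X^i` and every `c ≠ 0` there are unique
coefficients `c₂, …, c_s` such that `Φ = cX + Σ_{n=2}^s c_n X^n` solves the
Aczél–Jabotinsky equation mod `X^(s+1)`. -/
theorem aczel_jabotinsky_truncated_unique_solution (H : PowerSeries k)
    (hH0 : constantCoeff H = 0) (hH1 : coeff 1 H = 1)
    (s : ℕ) (hs : 2 ≤ s) (c : k) (hc : c ≠ 0) :
    ∃! Φ : PowerSeries k,
      constantCoeff Φ = 0 ∧ coeff 1 Φ = c ∧
      (∀ n, s < n → coeff n Φ = 0) ∧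
      (X : PowerSeries k) ^ (s + 1) ∣ comp H Φ - derivativeFun Φ * H :=
  aczel_jabotinsky_truncated_unique_solution_general H hH0 hH1 s hs c
end

section
/- Let l ≥ 1 be an integer and let H ∈ k⟦X⟧ have coefficient 0 of X^j for all j ≤ l and coefficient 1 of X^{l+1} (i.e. H = X^{l+1} + Σ_{j≥l+2} h_j X^j). If Φ ∈ k⟦X⟧ has order 1 and satisfies H∘Φ = Φ′·H, then the coefficient c₁ of X in Φ satisfies c₁^l = 1. -/
/-!
Compare the coefficients of `X^(l+1)` on both sides of `H ∘ Φ = Φ′ · H`. Since `H` is divisible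
by `X^(l+1)`, on the left only the leading term `X^(l+1)` of `H` contributes, giving
`c₁^(l+1)`, and on the right only the constant coefficient `c₁` of `Φ′` does. Hence
`c₁^(l+1) = c₁`, and `c₁ ≠ 0` can be cancelled.
-/

open PowerSeries

variable {k : Type*} [Field k] [CharZero k]

namespace PowerSeries

variable {R : Type*} [CommSemiring R]

theorem coeff_pow_self_of_constantCoeff_eq_zero {φ : R⟦X⟧} (hφ : constantCoeff φ = 0) (n : ℕ) :
    coeff n (φ ^ n) = coeff 1 φ ^ n := by
  obtain ⟨ψ, rfl⟩ := X_dvd_iff.mpr hφ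
  simpa [mul_pow, coeff_succ_X_mul] using coeff_X_pow_mul (ψ ^ n) n 0

theorem coeff_mul_of_coeff_lt_eq_zero {F G : R⟦X⟧} {n : ℕ} (hG : ∀ m < n, coeff m G = 0) :
    coeff n (F * G) = constantCoeff F * coeff n G := by
  obtain ⟨G, rfl⟩ := X_pow_dvd_iff.mpr hG
  have hXG := coeff_X_pow_mul G n 0
  have hXFG := coeff_X_pow_mul (F * G) n 0
  rw [zero_add] at hXG hXFG
  rw [mul_left_comm, hXFG, hXG]
  simp only [coeff_zero_eq_constantCoeff_apply, map_mul]

set_option linter.deprecated false in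
theorem constantCoeff_derivativeFun (f : R⟦X⟧) : constantCoeff (derivativeFun f) = coeff 1 f := by
  have h := coeff_derivative f 0
  rw [Nat.cast_zero, zero_add, zero_add, mul_one, coeff_zero_eq_constantCoeff_apply] at h
  exact h

end PowerSeries

omit [CharZero k] in
theorem coeff_comp_of_coeff_lt_eq_zero {H : PowerSeries k} {n : ℕ}
    (hH : ∀ m < n, coeff m H = 0) (Φ : PowerSeries k) :
    coeff n (comp H Φ) = coeff n H * coeff n (Φ ^ n) := by
  rw [comp, coeff_mk, Finset.sum_range_succ, Finset.sum_eq_zero, zero_add]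
  intro m hm
  rw [hH m (Finset.mem_range.mp hm), zero_mul]

set_option linter.deprecated false in
theorem aczel_jabotinsky_linear_coeff_root_of_unity_general (l : ℕ)
    (H : PowerSeries k)
    (hHlow : ∀ j, j ≤ l → coeff j H = 0)
    (hHlead : coeff (l + 1) H = 1)
    (Φ : PowerSeries k)
    (hΦ0 : constantCoeff Φ = 0) (hΦ1 : coeff 1 Φ ≠ 0)
    (hAJ : comp H Φ = derivativeFun Φ * H) :
    (coeff 1 Φ) ^ l = 1 := by
  have hHlow' : ∀ m < l + 1, coeff m H = 0 := fun m hm => hHlow m (Nat.lt_succ_iff.mp hm)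
  have hcoeff := congrArg (coeff (l + 1)) hAJ
  rw [coeff_comp_of_coeff_lt_eq_zero hHlow', coeff_mul_of_coeff_lt_eq_zero hHlow', hHlead,
    coeff_pow_self_of_constantCoeff_eq_zero hΦ0, constantCoeff_derivativeFun, one_mul, mul_one,
    pow_succ] at hcoeff
  exact mul_eq_right₀ hΦ1 |>.mp hcoeff

/-- For a generator `H = X^(l+1) + Σ_{j ≥ l+2} h_j X^j`, the linear coefficient
of every order-1 solution of the Aczél–Jabotinsky equation is an `l`-th root of
unity. -/
theorem aczel_jabotinsky_linear_coeff_root_of_unity (l : ℕ) (hl : 1 ≤ l)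
    (H : PowerSeries k)
    (hHlow : ∀ j, j ≤ l → coeff j H = 0)
    (hHlead : coeff (l + 1) H = 1)
    (Φ : PowerSeries k)
    (hΦ0 : constantCoeff Φ = 0) (hΦ1 : coeff 1 Φ ≠ 0)
    (hAJ : comp H Φ = derivativeFun Φ * H) :
    (coeff 1 Φ) ^ l = 1 :=
  aczel_jabotinsky_linear_coeff_root_of_unity_general l H hHlow hHlead Φ hΦ0 hΦ1 hAJ
end

section
/- Let l ≥ 1 be an integer, δ ∈ k, and H̃ = X^{l+1} + δ·X^{2l+1}. Suppose Φ ∈ k⟦X⟧ has constant coefficient 0 and coefficient of X equal to 1, satisfies H̃∘Φ = Φ′·H̃, and suppose there is an integer m ≥ 2 such that the coefficient of X^m in Φ is nonzero while the coefficient of X^j in Φ is zero for all 2 ≤ j < m. Then m = l+1. -/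
/-!
Write `Φ = X * G` and `m = d + 1`, so that `X ^ d ∣ G - 1` and `c := coeff d G` is the first
nonzero coefficient. As `Φ` has no constant term, `H̃ ∘ Φ = Φ ^ (l + 1) + δ Φ ^ (2l + 1)`, while
`Φ' = G + X G'`; cancelling `X ^ (l + 1)` turns the equation into
`G ^ (l + 1) + δ X ^ l G ^ (2l + 1) = (G + X G') (1 + δ X ^ l)`.
Modulo `X ^ (d + 1)` we have `G ^ n ≡ 1 + n c X ^ d`, `G + X G' ≡ 1 + (d + 1) c X ^ d`, and the two
`δ`-terms are both `≡ δ X ^ l` because `l ≥ 1`. Comparing coefficients of `X ^ d` gives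
`(l + 1) c = (d + 1) c`, hence `d = l`.
-/

open PowerSeries

variable {k : Type*} [Field k] [CharZero k]

/-- The normal form generator. -/
noncomputable def Htilde (l : ℕ) (δ : k) : PowerSeries k :=
  X ^ (l + 1) + C δ * X ^ (2 * l + 1)

section Comp

variable {K : Type*} [Field K]

theorem comp_add (f₁ f₂ g : K⟦X⟧) : comp (f₁ + f₂) g = comp f₁ g + comp f₂ g := by
  ext m
  simp only [comp, coeff_mk, map_add, add_mul, Finset.sum_add_distrib]

theorem comp_C_mul (a : K) (f g : K⟦X⟧) : comp (C a * f) g = C a * comp f g := by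
  ext m
  simp only [comp, coeff_mk, coeff_C_mul, Finset.mul_sum, mul_assoc]

theorem comp_X_pow {g : K⟦X⟧} (hg : constantCoeff g = 0) (n : ℕ) : comp (X ^ n) g = g ^ n := by
  ext m
  rw [comp, coeff_mk]
  simp only [coeff_X_pow, ite_mul, one_mul, zero_mul, Finset.sum_ite_eq', Finset.mem_range]
  split_ifs with hnm
  · rfl
  · exact (X_pow_dvd_iff.mp (pow_dvd_pow_of_dvd (X_dvd_iff.mpr hg) n) m (by omega)).symm

theorem comp_Htilde {Φ : K⟦X⟧} (hΦ : constantCoeff Φ = 0) (l : ℕ) (δ : K) :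
    comp (Htilde l δ) Φ = Φ ^ (l + 1) + C δ * Φ ^ (2 * l + 1) := by
  rw [Htilde, comp_add, comp_C_mul, comp_X_pow hΦ, comp_X_pow hΦ]

end Comp

section CongruentToOne

variable {R : Type*} [CommRing R] {G : R⟦X⟧} {d : ℕ}

theorem coeff_pow_of_X_pow_dvd_sub_one (hG : X ^ d ∣ G - 1) (hd : 1 ≤ d) (n : ℕ) :
    coeff d (G ^ n) = n * coeff d G := by
  have hsq : X ^ (2 * d) ∣ (1 + (G - 1)) ^ n - 1 ^ (n - 1) * (G - 1) * (n : R⟦X⟧) - 1 ^ n :=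
    (pow_mul' (X : R⟦X⟧) 2 d ▸ pow_dvd_pow_of_dvd hG 2).trans (sq_dvd_add_pow_sub_sub _ _ n)
  have := X_pow_dvd_iff.mp hsq d (by omega)
  simp only [add_sub_cancel, one_pow, one_mul, map_sub, coeff_one, if_neg (by omega : d ≠ 0),
    ← map_natCast (C (R := R)), coeff_mul_C] at this
  linear_combination this

theorem coeff_X_pow_mul_of_X_pow_dvd_sub_one (hG : X ^ d ∣ G - 1) {l : ℕ} (hl : 1 ≤ l) :
    coeff d (X ^ l * G) = coeff d (X ^ l : R⟦X⟧) := by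
  have h : X ^ (l + d) ∣ X ^ l * G - X ^ l := by
    rw [pow_add, ← mul_sub_one]; exact mul_dvd_mul_left _ hG
  have := X_pow_dvd_iff.mp h d (by omega)
  rwa [map_sub, sub_eq_zero] at this

theorem X_pow_dvd_pow_sub_one (hG : X ^ d ∣ G - 1) (n : ℕ) : X ^ d ∣ G ^ n - 1 := by
  simpa only [one_pow] using hG.trans (sub_dvd_pow_sub_pow G 1 n)

theorem coeff_X_mul_derivative (f : R⟦X⟧) (n : ℕ) : coeff n (X * d⁄dX R f) = n * coeff n f := by
  cases n with
  | zero => simp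
  | succ n => rw [coeff_succ_X_mul, coeff_derivative, mul_comm]; push_cast; ring

theorem X_pow_dvd_add_X_mul_derivative_sub_one (hG : X ^ d ∣ G - 1) :
    X ^ d ∣ G + X * d⁄dX R G - 1 := by
  refine X_pow_dvd_iff.mpr fun j hj => ?_
  have hGj := X_pow_dvd_iff.mp hG j hj
  rw [map_sub, coeff_one] at hGj
  rw [add_sub_right_comm, map_add, coeff_X_mul_derivative, map_sub, coeff_one]
  split_ifs at hGj ⊢ with h0 <;> simp_all

theorem coeff_add_X_mul_derivative (f : R⟦X⟧) (n : ℕ) :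
    coeff n (f + X * d⁄dX R f) = (n + 1) * coeff n f := by
  rw [map_add, coeff_X_mul_derivative]; ring

end CongruentToOne

/-- If `Φ = X + c_m X^m + …` (with `c_m ≠ 0`) solves the Aczél–Jabotinsky
equation with generator `H̃ = X^(l+1) + δX^(2l+1)`, then `m = l + 1`. -/
theorem aczel_jabotinsky_first_nonzero_coeff (l : ℕ) (hl : 1 ≤ l) (δ : k)
    (Φ : PowerSeries k)
    (hΦ0 : constantCoeff Φ = 0) (hΦ1 : coeff 1 Φ = 1)
    (hAJ : comp (Htilde l δ) Φ = derivativeFun Φ * Htilde l δ)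
    (m : ℕ) (hm : 2 ≤ m)
    (hmc : coeff m Φ ≠ 0)
    (hbelow : ∀ j, 2 ≤ j → j < m → coeff j Φ = 0) :
    m = l + 1 := by
  obtain ⟨d, rfl⟩ : ∃ d, m = d + 1 := ⟨m - 1, by omega⟩
  obtain ⟨G, rfl⟩ := X_dvd_iff.mpr hΦ0
  rw [coeff_succ_X_mul] at hmc
  have hG : X ^ d ∣ G - 1 := X_pow_dvd_iff.mpr fun j hj => by
    rw [map_sub, ← coeff_succ_X_mul, coeff_one]
    rcases j with _ | j
    · simp [hΦ1]
    · simp [hbelow (j + 2) (by omega) (by omega)]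
  have hGG' : G ^ (l + 1) + C δ * (X ^ l * G ^ (2 * l + 1)) =
      (G + X * d⁄dX k G) + C δ * (X ^ l * (G + X * d⁄dX k G)) := by
    refine mul_left_cancel₀ (pow_ne_zero (l + 1) X_ne_zero) ?_
    rw [comp_Htilde hΦ0] at hAJ
    change _ = d⁄dX k (X * G) * _ at hAJ
    rw [Derivation.leibniz, derivative_X, Htilde] at hAJ
    linear_combination hAJ
  have hcoeff := congrArg (coeff d) hGG'
  rw [map_add, map_add, coeff_C_mul, coeff_C_mul,
    coeff_X_pow_mul_of_X_pow_dvd_sub_one (X_pow_dvd_pow_sub_one hG _) hl,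
    coeff_X_pow_mul_of_X_pow_dvd_sub_one (X_pow_dvd_add_X_mul_derivative_sub_one hG) hl,
    coeff_pow_of_X_pow_dvd_sub_one hG (by omega), coeff_add_X_mul_derivative,
    add_left_inj] at hcoeff
  exact_mod_cast (mul_right_cancel₀ hmc hcoeff).symm
end

section
/- Let l ≥ 1 be an integer and let s be a natural number with l+1 ≤ s ≤ 2l. A power series Φ ∈ k⟦X⟧ of order 1 satisfies Φ^{l+1} ≡ Φ′·X^{l+1} mod X^{s+1} (the Aczél–Jabotinsky equation with generator X^{l+1}, taken mod X^{s+1}) if and only if the coefficient c₁ of X in Φ satisfies c₁^l = 1 and the coefficient of X^j in Φ is 0 for every j with 2 ≤ j ≤ s−l. -/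
/-! Writing `Φ = X * f`, the equation reads `f ^ (l + 1) ≡ f + X f' mod X ^ (s - l)`; its constant
term says `c ^ (l + 1) = c` for `c = f(0)`, i.e. `c ^ l = 1`. If moreover `f ≡ c mod X ^ n` with
`n ≥ 1`, the binomial expansion of `(c + (f - c)) ^ (l + 1)` shows that modulo `X ^ (n + 1)` the
difference of the two sides is `(l - n) (f - c)`. As `l - n` is invertible for `n < l`, the
congruence `f ≡ c` thus lifts from `X ^ n` to `X ^ (n + 1)` up to `n = s - l`; conversely
`f ≡ c mod X ^ (s - l)` makes the difference vanish modulo `X ^ (s - l)`. -/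

open PowerSeries

variable {k : Type*} [Field k] [CharZero k]

namespace PowerSeries

section CommRing

variable {R : Type*} [CommRing R]

theorem derivative_X_mul (f : R⟦X⟧) : d⁄dX R (X * f) = f + X * d⁄dX R f := by
  rw [Derivation.leibniz, derivative_X, smul_eq_mul, smul_eq_mul, mul_one, add_comm]

theorem X_mul_derivative_X_pow_mul (n : ℕ) (f : R⟦X⟧) :
    X * d⁄dX R (X ^ n * f) = X ^ n * ((n : R⟦X⟧) * f + X * d⁄dX R f) := by
  induction n generalizing f with
  | zero => simp
  | succ n ih =>
    rw [pow_succ, mul_assoc, ih, derivative_X_mul]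
    push_cast
    ring

theorem X_pow_dvd_sub_C_constantCoeff_iff (f : R⟦X⟧) (m : ℕ) :
    X ^ m ∣ f - C (constantCoeff f) ↔ ∀ i, 1 ≤ i → i < m → coeff i f = 0 := by
  rw [X_pow_dvd_iff]
  refine forall_congr' fun i => ⟨fun h hi him => ?_, fun h him => ?_⟩
  · simpa [coeff_C, Nat.one_le_iff_ne_zero.mp hi] using h him
  · rcases Nat.eq_zero_or_pos i with rfl | hi
    · simp
    · simp [coeff_C, hi.ne', h hi him]

/-- With `Φ = X * f`, the Aczél–Jabotinsky defect `Φ ^ (l + 1) - Φ' X ^ (l + 1)` is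
`X ^ (l + 1) * ajDefect l f`. -/
noncomputable def ajDefect (l : ℕ) (f : R⟦X⟧) : R⟦X⟧ :=
  f ^ (l + 1) - f - X * d⁄dX R f

theorem X_mul_pow_sub_derivative_mul_X_pow (l : ℕ) (f : R⟦X⟧) :
    (X * f) ^ (l + 1) - d⁄dX R (X * f) * X ^ (l + 1) = X ^ (l + 1) * ajDefect l f := by
  rw [derivative_X_mul, ajDefect]
  ring

theorem constantCoeff_ajDefect (l : ℕ) (f : R⟦X⟧) :
    constantCoeff (ajDefect l f) = constantCoeff f ^ (l + 1) - constantCoeff f := by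
  simp [ajDefect]

theorem X_pow_succ_dvd_ajDefect_sub {l n : ℕ} {f : R⟦X⟧} {c : R} (hn : 1 ≤ n) (hc : c ^ l = 1)
    (hf : X ^ n ∣ f - C c) :
    X ^ (n + 1) ∣ ajDefect l f - C ((l : R) - n) * (f - C c) := by
  obtain ⟨g, hg⟩ := hf
  obtain ⟨q, hq⟩ := sq_dvd_add_pow_sub_sub (X ^ n * g) (C c) (l + 1)
  obtain ⟨m, rfl⟩ : ∃ m, n = m + 1 := ⟨n - 1, by omega⟩
  have hf : f = C c + X ^ (m + 1) * g := by rw [← hg]; ring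
  have hcl : C c ^ l = 1 := by rw [← map_pow, hc, map_one]
  refine ⟨X ^ m * g ^ 2 * q - d⁄dX R g, ?_⟩
  rw [ajDefect, hf, map_add, derivative_C, zero_add, X_mul_derivative_X_pow_mul, map_sub,
    map_natCast, map_natCast]
  rw [Nat.add_sub_cancel] at hq
  push_cast at hq
  linear_combination hq + (C c + X ^ (m + 1) * g * (l + 1)) * hcl

theorem X_pow_dvd_ajDefect {l m : ℕ} {f : R⟦X⟧} {c : R} (hm : 1 ≤ m) (hc : c ^ l = 1)
    (hf : X ^ m ∣ f - C c) : X ^ m ∣ ajDefect l f := by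
  have h := (pow_dvd_pow X m.le_succ).trans (X_pow_succ_dvd_ajDefect_sub hm hc hf)
  simpa using dvd_add h (dvd_mul_of_dvd_right hf (C ((l : R) - m)))

end CommRing

section IsDomain

variable {R : Type*} [CommRing R] [IsDomain R]

theorem X_pow_add_dvd_X_mul_pow_sub_iff (l m : ℕ) (f : R⟦X⟧) :
    X ^ (l + 1 + m) ∣ (X * f) ^ (l + 1) - d⁄dX R (X * f) * X ^ (l + 1) ↔
      X ^ m ∣ ajDefect l f := by
  rw [X_mul_pow_sub_derivative_mul_X_pow, pow_add, mul_dvd_mul_iff_left (pow_ne_zero _ X_ne_zero)]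

theorem pow_eq_one_of_X_dvd_ajDefect {l : ℕ} {f : R⟦X⟧} (hf : constantCoeff f ≠ 0)
    (h : X ∣ ajDefect l f) : constantCoeff f ^ l = 1 := by
  rw [X_dvd_iff, constantCoeff_ajDefect] at h
  have : constantCoeff f * (constantCoeff f ^ l - 1) = 0 := by linear_combination h
  exact sub_eq_zero.mp ((mul_eq_zero.mp this).resolve_left hf)

end IsDomain

theorem X_pow_dvd_sub_C_of_X_pow_dvd_ajDefect {l m : ℕ} {f : k⟦X⟧} (hm : m ≤ l)
    (hc : constantCoeff f ^ l = 1) (h : X ^ m ∣ ajDefect l f) :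
    X ^ m ∣ f - C (constantCoeff f) := by
  induction m with
  | zero => simp
  | succ n ih =>
    have hn := ih (by omega) ((pow_dvd_pow X n.le_succ).trans h)
    rcases Nat.eq_zero_or_pos n with rfl | hn1
    · simp [X_dvd_iff]
    have hunit : IsUnit (C ((l : k) - n)) :=
      (isUnit_iff_ne_zero.mpr (sub_ne_zero.mpr (Nat.cast_injective.ne (by omega)))).map C
    have := dvd_sub h (X_pow_succ_dvd_ajDefect_sub hn1 hc hn)
    rwa [sub_sub_cancel, hunit.dvd_mul_left] at this

end PowerSeries

theorem aczel_jabotinsky_truncated_monomial_generator_general (l s : ℕ)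
    (hs1 : l + 1 ≤ s) (hs2 : s ≤ 2 * l)
    (Φ : PowerSeries k)
    (hΦ0 : constantCoeff Φ = 0) (hΦ1 : coeff 1 Φ ≠ 0) :
    (X : PowerSeries k) ^ (s + 1) ∣ Φ ^ (l + 1) - derivativeFun Φ * X ^ (l + 1) ↔
      (coeff 1 Φ) ^ l = 1 ∧ ∀ j, 2 ≤ j → j ≤ s - l → coeff j Φ = 0 := by
  obtain ⟨f, rfl⟩ := X_dvd_iff.mpr hΦ0
  have hcoeff : (∀ j, 2 ≤ j → j ≤ s - l → coeff j (X * f) = 0) ↔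
      X ^ (s - l) ∣ f - C (constantCoeff f) := by
    rw [X_pow_dvd_sub_C_constantCoeff_iff]
    refine ⟨fun h i hi his => ?_, fun h j hj hjs => ?_⟩
    · simpa using h (i + 1) (by omega) (by omega)
    · obtain ⟨i, rfl⟩ : ∃ i, j = i + 1 := ⟨j - 1, by omega⟩
      rw [coeff_succ_X_mul]
      exact h i (by omega) (by omega)
  rw [coeff_succ_X_mul, coeff_zero_eq_constantCoeff_apply] at hΦ1 ⊢
  rw [hcoeff, show s + 1 = l + 1 + (s - l) by omega,
    show derivativeFun (X * f) = d⁄dX k (X * f) from rfl, X_pow_add_dvd_X_mul_pow_sub_iff]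
  constructor
  · intro h
    have hc := pow_eq_one_of_X_dvd_ajDefect hΦ1 ((dvd_pow_self X (by omega)).trans h)
    exact ⟨hc, X_pow_dvd_sub_C_of_X_pow_dvd_ajDefect (by omega) hc h⟩
  · rintro ⟨hc, hf⟩
    exact X_pow_dvd_ajDefect (by omega) hc hf

/-- For `l+1 ≤ s ≤ 2l`, an order-1 series `Φ` satisfies the truncated
Aczél–Jabotinsky equation `Φ^(l+1) ≡ Φ′·X^(l+1) mod X^(s+1)` (generator
`X^(l+1)`) iff its linear coefficient is an `l`-th root of unity and its
coefficients at `X^j` vanish for `2 ≤ j ≤ s-l`. -/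
theorem aczel_jabotinsky_truncated_monomial_generator (l s : ℕ)
    (hl : 1 ≤ l) (hs1 : l + 1 ≤ s) (hs2 : s ≤ 2 * l)
    (Φ : PowerSeries k)
    (hΦ0 : constantCoeff Φ = 0) (hΦ1 : coeff 1 Φ ≠ 0) :
    (X : PowerSeries k) ^ (s + 1) ∣ Φ ^ (l + 1) - derivativeFun Φ * X ^ (l + 1) ↔
      (coeff 1 Φ) ^ l = 1 ∧ ∀ j, 2 ≤ j → j ≤ s - l → coeff j Φ = 0 :=
  aczel_jabotinsky_truncated_monomial_generator_general l s hs1 hs2 Φ hΦ0 hΦ1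
end
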